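/- arXiv:math/0106148 — 3 statements merged into one kernel-verified Lean document; each statement's English description precedes it below -/
import Mathlib

section
/- Let m ≥ 1 and let k_1 ≥ 2, k_2,…,k_m ≥ 1 be integers, and let λ ∈ ℂ with |λ| < 1. Then the power series Σ_{l=0}^∞ ( Σ_{ε_1,…,ε_m ≥ 0, ε_1+⋯+ε_m = l} ζ(k_1+ε_1,…,k_m+ε_m) ) λ^l converges absolutely, the series Σ_{n_1 > n_2 > ⋯ > n_m > 0} ∏_{i=1}^m 1/(n_i^{k_i−1}(n_i − λ)) converges absolutely, and the two are equal. -/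
/-!
Expanding each factor `1 / (nᵢ - λ)` as the geometric series `Σₑ λᵉ / nᵢ^(e+1)` turns the
right-hand side into a double series over pairs `(n, ε)` of the terms `∏ᵢ λ^εᵢ / nᵢ^(kᵢ+εᵢ)`.
It converges absolutely because `|λ| < 1` and `ζ(k)` converges, the latter by the bound
`∏ nᵢ^kᵢ ≥ n₁ · ∏ nᵢ ≥ ∏ nᵢ^(1+1/m)` on decreasing tuples. Summing over `n` first gives
`λ^|ε| ζ(k + ε)`, and grouping the `ε` by `|ε| = l` gives the left-hand side.
-/

/-- Strictly decreasing tuples of positive integers of length `m`. -/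
def DTuple (m : ℕ) : Type :=
  {n : Fin m → ℕ // StrictAnti n ∧ ∀ i, 0 < n i}

/-- The multiple zeta value `ζ(k₁,…,k_m) = Σ_{n₁ > ⋯ > n_m > 0} ∏ 1/nᵢ^{kᵢ}`. -/
noncomputable def mzv (m : ℕ) (k : Fin m → ℕ) : ℝ :=
  ∑' n : DTuple m, ∏ i, (1 : ℝ) / (n.1 i : ℝ) ^ k i

open Finset Function

section PiProduct

variable {R β : Type*} [NormedCommRing R]

theorem summable_norm_prod_pi : ∀ {m : ℕ} (f : Fin m → β → R),
    (∀ i, Summable fun b => ‖f i b‖) → Summable fun x : Fin m → β => ‖∏ i, f i (x i)‖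
  | 0, _, _ => Summable.of_finite
  | _ + 1, f, hf => by
    rw [← (Fin.consEquiv fun _ => β).summable_iff]
    simpa [Fin.prod_univ_succ, Fin.consEquiv, comp_def] using
      (hf 0).mul_norm (summable_norm_prod_pi (fun i => f i.succ) fun i => hf i.succ)

theorem tsum_prod_pi [CompleteSpace R] : ∀ {m : ℕ} (f : Fin m → β → R),
    (∀ i, Summable fun b => ‖f i b‖) → ∑' x : Fin m → β, ∏ i, f i (x i) = ∏ i, ∑' b, f i b
  | 0, _, _ => by simp
  | _ + 1, f, hf => by
    rw [← (Fin.consEquiv fun _ => β).tsum_eq, Fin.prod_univ_succ,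
      ← tsum_prod_pi (fun i => f i.succ) fun i => hf i.succ,
      tsum_mul_tsum_of_summable_norm (hf 0) (summable_norm_prod_pi _ fun i => hf i.succ)]
    simp [Fin.prod_univ_succ, Fin.consEquiv]

end PiProduct

theorem hasSum_sum_antidiagonalTuple {α : Type*} [AddCommGroup α] [UniformSpace α]
    [IsUniformAddGroup α] [CompleteSpace α] [T2Space α] {m : ℕ} {f : (Fin m → ℕ) → α}
    (hf : Summable f) :
    HasSum (fun l => ∑ ε ∈ Nat.antidiagonalTuple m l, f ε) (∑' ε, f ε) := by
  convert hf.hasSum.tsum_fiberwise (fun ε => ∑ i, ε i) with l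
  have : (fun ε : Fin m → ℕ => ∑ i, ε i) ⁻¹' {l} = ↑(Nat.antidiagonalTuple m l) := by
    ext; simp [Nat.mem_antidiagonalTuple]
  rw [this, Finset.tsum_subtype']

theorem prod_rpow_inv_card_le {ι : Type*} [Fintype ι] [Nonempty ι] {a : ι → ℝ} {b : ℝ}
    (ha : ∀ i, 0 ≤ a i) (hab : ∀ i, a i ≤ b) : ∏ i, a i ^ (Fintype.card ι : ℝ)⁻¹ ≤ b := by
  have hb : 0 ≤ b := (ha (Classical.arbitrary ι)).trans (hab _)
  calc ∏ i, a i ^ (Fintype.card ι : ℝ)⁻¹ ≤ ∏ _i : ι, b ^ (Fintype.card ι : ℝ)⁻¹ :=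
        prod_le_prod (fun i _ => Real.rpow_nonneg (ha i) _) fun i _ =>
          Real.rpow_le_rpow (ha i) (hab i) (by positivity)
    _ = b := by rw [prod_const, card_univ, Real.rpow_inv_natCast_pow hb Fintype.card_ne_zero]

theorem DTuple.prod_rpow_le_prod_pow {m : ℕ} (hm : 1 ≤ m) {k : Fin m → ℕ}
    (hk0 : 2 ≤ k ⟨0, hm⟩) (hk : ∀ i, 1 ≤ k i) (n : DTuple m) :
    ∏ i, (n.1 i : ℝ) ^ (1 + (m : ℝ)⁻¹) ≤ ∏ i, (n.1 i : ℝ) ^ k i := by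
  have : NeZero m := ⟨by omega⟩
  set i₀ : Fin m := ⟨0, hm⟩
  have hn1 : ∀ i, (1 : ℝ) ≤ n.1 i := fun i => by exact_mod_cast n.2.2 i
  have hle : ∀ i, (n.1 i : ℝ) ≤ n.1 i₀ := fun i => by
    exact_mod_cast n.2.1.antitone (Fin.mk_le_of_le_val (Nat.zero_le _))
  calc ∏ i, (n.1 i : ℝ) ^ (1 + (m : ℝ)⁻¹)
      = (∏ i, (n.1 i : ℝ)) * ∏ i, (n.1 i : ℝ) ^ (m : ℝ)⁻¹ := by
        rw [← prod_mul_distrib]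
        refine prod_congr rfl fun i _ => ?_
        rw [Real.rpow_add (by linarith [hn1 i]), Real.rpow_one]
    _ ≤ (∏ i, (n.1 i : ℝ)) * n.1 i₀ := by
        gcongr
        simpa using prod_rpow_inv_card_le (fun i => by positivity) hle
    _ = ∏ i, (n.1 i : ℝ) ^ (1 + if i₀ = i then 1 else 0) := by
        simp only [pow_add, pow_one, prod_mul_distrib, prod_pow_boole, mem_univ, if_true]
    _ ≤ ∏ i, (n.1 i : ℝ) ^ k i := by
        refine prod_le_prod (fun i _ => by positivity) fun i _ => pow_le_pow_right₀ (hn1 i) ?_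
        split_ifs with h
        · exact h ▸ hk0
        · exact hk i

theorem summable_prod_one_div_pow {m : ℕ} (hm : 1 ≤ m) {k : Fin m → ℕ}
    (hk0 : 2 ≤ k ⟨0, hm⟩) (hk : ∀ i, 1 ≤ k i) :
    Summable fun n : DTuple m => ∏ i, (1 : ℝ) / (n.1 i : ℝ) ^ k i := by
  set p : ℝ := 1 + (m : ℝ)⁻¹
  have hp : 1 < p := by
    have : (0 : ℝ) < (m : ℝ)⁻¹ := by positivity
    linarith
  have hpi : Summable fun x : Fin m → ℕ => ∏ i, 1 / (x i : ℝ) ^ p :=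
    (summable_norm_prod_pi (fun _ (j : ℕ) => 1 / (j : ℝ) ^ p) fun _ =>
      (Real.summable_one_div_nat_rpow.mpr hp).norm).of_norm
  refine (hpi.comp_injective Subtype.val_injective).of_nonneg_of_le
    (fun n => by positivity) fun n => ?_
  simp only [prod_div_distrib, prod_const_one]
  exact one_div_le_one_div_of_le (prod_pos fun i _ => by have := n.2.2 i; positivity)
    (DTuple.prod_rpow_le_prod_pow hm hk0 hk n)

theorem mzv_nonneg (m : ℕ) (k : Fin m → ℕ) : 0 ≤ mzv m k :=
  tsum_nonneg fun _ => prod_nonneg fun _ _ => by positivity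

section Geometric

variable {K : Type*} [NormedField K] {x y : K}

theorem summable_norm_pow_div_pow_add (hxy : ‖x‖ < ‖y‖) (k : ℕ) :
    Summable fun e : ℕ => ‖x ^ e / y ^ (k + e)‖ := by
  have hy : 0 < ‖y‖ := (norm_nonneg x).trans_lt hxy
  have hq : ‖x‖ / ‖y‖ < 1 := (div_lt_one hy).mpr hxy
  refine ((summable_geometric_of_lt_one (by positivity) hq).mul_left (‖y‖ ^ k)⁻¹).congr
    fun e => ?_
  rw [norm_div, norm_pow, norm_pow, pow_add, div_pow]
  field_simp

theorem hasSum_pow_div_pow_add [CompleteSpace K] (hxy : ‖x‖ < ‖y‖) {k : ℕ} (hk : 1 ≤ k) :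
    HasSum (fun e : ℕ => x ^ e / y ^ (k + e)) (1 / (y ^ (k - 1) * (y - x))) := by
  have hy : y ≠ 0 := norm_pos_iff.mp ((norm_nonneg x).trans_lt hxy)
  have hyx : y - x ≠ 0 := sub_ne_zero.mpr fun h => (h ▸ hxy).false
  have hq : ‖x / y‖ < 1 := by
    rw [norm_div, div_lt_one ((norm_nonneg x).trans_lt hxy)]
    exact hxy
  obtain ⟨j, rfl⟩ : ∃ j, k = j + 1 := ⟨k - 1, by omega⟩
  have hterm : (fun e : ℕ => x ^ e / y ^ (j + 1 + e)) = fun e => 1 / y ^ (j + 1) * (x / y) ^ e := by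
    funext e
    rw [div_pow, pow_add]
    field_simp
  have hval : 1 / (y ^ (j + 1 - 1) * (y - x)) = 1 / y ^ (j + 1) * (1 - x / y)⁻¹ := by
    rw [Nat.add_sub_cancel]
    field_simp
    ring
  rw [hterm, hval]
  exact (hasSum_geometric_of_norm_lt_one hq).mul_left _

end Geometric

section Expansion

variable {𝕜 : Type*} [RCLike 𝕜] {m : ℕ} {k : Fin m → ℕ}

def expansionTerm (x : 𝕜) (k : Fin m → ℕ) (n : DTuple m) (ε : Fin m → ℕ) : 𝕜 :=
  ∏ i, x ^ ε i / (n.1 i : 𝕜) ^ (k i + ε i)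

theorem norm_expansionTerm (x : 𝕜) (k : Fin m → ℕ) (n : DTuple m) (ε : Fin m → ℕ) :
    ‖expansionTerm x k n ε‖ = expansionTerm ‖x‖ k n ε := by
  simp [expansionTerm, norm_prod, norm_div, norm_pow]

theorem DTuple.norm_lt_norm_coe {x : 𝕜} (hx : ‖x‖ < 1) (n : DTuple m) (i : Fin m) :
    ‖x‖ < ‖(n.1 i : 𝕜)‖ := by
  rw [RCLike.norm_natCast]
  exact hx.trans_le (by exact_mod_cast n.2.2 i)

theorem summable_norm_expansionTerm_tuple {x : 𝕜} (hx : ‖x‖ < 1) (n : DTuple m) :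
    Summable fun ε => ‖expansionTerm x k n ε‖ := by
  unfold expansionTerm
  exact summable_norm_prod_pi (fun i e => x ^ e / (n.1 i : 𝕜) ^ (k i + e)) fun i =>
    summable_norm_pow_div_pow_add (n.norm_lt_norm_coe hx i) _

theorem tsum_expansionTerm_tuple {x : 𝕜} (hx : ‖x‖ < 1) (hk : ∀ i, 1 ≤ k i) (n : DTuple m) :
    ∑' ε, expansionTerm x k n ε = ∏ i, 1 / ((n.1 i : 𝕜) ^ (k i - 1) * ((n.1 i : 𝕜) - x)) := by
  unfold expansionTerm
  rw [tsum_prod_pi (fun i e => x ^ e / (n.1 i : 𝕜) ^ (k i + e)) fun i =>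
    summable_norm_pow_div_pow_add (n.norm_lt_norm_coe hx i) _]
  exact prod_congr rfl fun i _ => (hasSum_pow_div_pow_add (n.norm_lt_norm_coe hx i) (hk i)).tsum_eq

theorem tsum_expansionTerm_tuple_le {r : ℝ} (hr0 : 0 ≤ r) (hr1 : r < 1) (hk : ∀ i, 1 ≤ k i)
    (n : DTuple m) :
    ∑' ε, expansionTerm r k n ε ≤ (1 - r)⁻¹ ^ m * ∏ i, 1 / (n.1 i : ℝ) ^ k i := by
  rw [tsum_expansionTerm_tuple (by rwa [Real.norm_of_nonneg hr0]) hk, ← Fin.prod_const,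
    ← prod_mul_distrib]
  refine prod_le_prod (fun i _ => ?_) fun i _ => ?_
  · exact one_div_nonneg.mpr (mul_nonneg (by positivity)
      (sub_nonneg.mpr (hr1.le.trans (by exact_mod_cast n.2.2 i))))
  have ha : (1 : ℝ) ≤ n.1 i := by exact_mod_cast n.2.2 i
  obtain ⟨j, hj⟩ : ∃ j, k i = j + 1 := ⟨k i - 1, by have := hk i; omega⟩
  rw [hj, Nat.add_sub_cancel]
  calc 1 / ((n.1 i : ℝ) ^ j * (n.1 i - r)) ≤ 1 / ((n.1 i : ℝ) ^ (j + 1) * (1 - r)) := by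
        refine one_div_le_one_div_of_le (by have := sub_pos.mpr hr1; positivity) ?_
        rw [pow_succ, mul_assoc]
        gcongr
        nlinarith
    _ = (1 - r)⁻¹ * (1 / (n.1 i : ℝ) ^ (j + 1)) := by
        rw [mul_comm, one_div, mul_inv, one_div]

theorem tsum_expansionTerm_dtuple (x : 𝕜) (k : Fin m → ℕ) (ε : Fin m → ℕ) :
    ∑' n, expansionTerm x k n ε = x ^ (∑ i, ε i) * (mzv m (fun i => k i + ε i) : 𝕜) := by
  rw [mzv, RCLike.ofReal_tsum, ← tsum_mul_left]
  refine tsum_congr fun n => ?_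
  simp [expansionTerm, div_eq_mul_inv, prod_mul_distrib, prod_pow_eq_pow_sum]

theorem sum_antidiagonalTuple_tsum_expansionTerm (x : 𝕜) (k : Fin m → ℕ) (l : ℕ) :
    ∑ ε ∈ Nat.antidiagonalTuple m l, ∑' n, expansionTerm x k n ε =
      ((∑ ε ∈ Nat.antidiagonalTuple m l, mzv m fun i => k i + ε i : ℝ) : 𝕜) * x ^ l := by
  rw [RCLike.ofReal_sum, sum_mul]
  refine sum_congr rfl fun ε hε => ?_
  rw [tsum_expansionTerm_dtuple, Nat.mem_antidiagonalTuple.mp hε, mul_comm]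

theorem summable_norm_expansionTerm (hm : 1 ≤ m) (hk0 : 2 ≤ k ⟨0, hm⟩) (hk : ∀ i, 1 ≤ k i)
    {x : 𝕜} (hx : ‖x‖ < 1) :
    Summable fun p : DTuple m × (Fin m → ℕ) => ‖expansionTerm x k p.1 p.2‖ := by
  simp only [norm_expansionTerm]
  have hnonneg : ∀ p : DTuple m × (Fin m → ℕ), 0 ≤ expansionTerm ‖x‖ k p.1 p.2 := fun p =>
    norm_expansionTerm x k p.1 p.2 ▸ norm_nonneg _
  have hx' : ‖(‖x‖ : ℝ)‖ < 1 := by rwa [norm_norm]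
  refine (summable_prod_of_nonneg hnonneg).mpr ⟨fun n => ?_, ?_⟩
  · exact (summable_norm_expansionTerm_tuple hx' n).of_norm
  · exact ((summable_prod_one_div_pow hm hk0 hk).mul_left _).of_nonneg_of_le
      (fun n => tsum_nonneg fun ε => hnonneg (n, ε))
      fun n => tsum_expansionTerm_tuple_le (norm_nonneg x) hx hk n

end Expansion

/-- The generating series `Σ_l (Σ_{|ε|=l} ζ(k+ε)) λ^l` converges absolutely for `|λ| < 1`,
the series `Σ_{n₁>⋯>n_m>0} ∏ 1/(nᵢ^{kᵢ-1}(nᵢ-λ))` converges absolutely, and they are equal. -/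
theorem generating_series_eq (m : ℕ) (hm : 1 ≤ m) (k : Fin m → ℕ)
    (hk0 : 2 ≤ k ⟨0, hm⟩) (hk : ∀ i, 1 ≤ k i)
    (lam : ℂ) (hlam : ‖lam‖ < 1) :
    Summable (fun l : ℕ =>
      ‖((∑ ε ∈ Finset.Nat.antidiagonalTuple m l, mzv m fun i => k i + ε i : ℝ) : ℂ)
        * lam ^ l‖) ∧
    Summable (fun n : DTuple m =>
      ‖∏ i, 1 / ((n.1 i : ℂ) ^ (k i - 1) * ((n.1 i : ℂ) - lam))‖) ∧
    (∑' l : ℕ,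
        ((∑ ε ∈ Finset.Nat.antidiagonalTuple m l, mzv m fun i => k i + ε i : ℝ) : ℂ)
          * lam ^ l)
      = ∑' n : DTuple m, ∏ i, 1 / ((n.1 i : ℂ) ^ (k i - 1) * ((n.1 i : ℂ) - lam)) := by
  have hF := summable_norm_expansionTerm hm hk0 hk hlam
  have hsum : Summable (uncurry (expansionTerm lam k)) := hF.of_norm
  have hcol : Summable fun ε => ∑' n, expansionTerm lam k n ε := hsum.prod_symm.prod
  have hFr := summable_norm_expansionTerm hm hk0 hk (x := (‖lam‖ : ℝ)) (by rwa [norm_norm])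
  have hcolr : Summable fun ε => ∑' n, expansionTerm (‖lam‖ : ℝ) k n ε :=
    hFr.of_norm.prod_symm.prod
  refine ⟨?_, ?_, ?_⟩
  · refine (hasSum_sum_antidiagonalTuple hcolr).summable.congr fun l => ?_
    rw [sum_antidiagonalTuple_tsum_expansionTerm, norm_mul, norm_pow, Complex.norm_real,
      Real.norm_of_nonneg (sum_nonneg fun ε _ => mzv_nonneg _ _), RCLike.ofReal_real_eq_id, id]
  · refine hF.prod.of_nonneg_of_le (fun n => norm_nonneg _) fun n => ?_
    rw [← tsum_expansionTerm_tuple hlam hk n]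
    exact norm_tsum_le_tsum_norm (hF.prod_factor n)
  · calc _ = ∑' l, ∑ ε ∈ Nat.antidiagonalTuple m l, ∑' n, expansionTerm lam k n ε :=
          tsum_congr fun l => (sum_antidiagonalTuple_tsum_expansionTerm lam k l).symm
      _ = ∑' ε, ∑' n, expansionTerm lam k n ε := (hasSum_sum_antidiagonalTuple hcol).tsum_eq
      _ = ∑' n, ∑' ε, expansionTerm lam k n ε := hsum.tsum_comm
      _ = _ := tsum_congr (tsum_expansionTerm_tuple hlam hk)
end

section
/- Let m ≥ 1 and let k_1,…,k_m, l_1,…,l_m be nonnegative integers with k_1 ≥ 1 and l_m ≥ 1, and set L_0 = 0, L_i = l_1 + ⋯ + l_i. Then for every λ ∈ ℂ that is not a positive integer, the family ∏_{i=1}^m [ 1/n_{L_{i−1}+1}^{k_i} · ∏_{j=L_{i−1}+1}^{L_i} 1/(n_j − λ) ], indexed by strictly decreasing tuples of positive integers n_1 > n_2 > ⋯ > n_{L_m} > 0, is absolutely summable; i.e. the series defining f({k_i,l_i}_{i=1}^m; λ) converges absolutely at every λ ∈ ℂ outside the positive integers. -/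
/-!
Each factor `1 / (n - λ)` is `O(1 / n)` because `n / (n - λ) → 1`, every factor `n ^ (-kᵢ)` is at
most `1`, and `k₁ ≥ 1` leaves one factor `1 / n₁`. So a summand is at most
`C ^ L · n₁⁻¹ ∏ⱼ nⱼ⁻¹`. As `n₁` is the largest entry, `n₁⁻¹ ≤ ∏ⱼ nⱼ ^ (-1/L)`, which bounds the
summand by `C ^ L ∏ⱼ nⱼ ^ (-(1 + 1/L))`: a product of convergent `p`-series over `ℕ ^ L`, into
which the decreasing tuples inject.
-/

/-- Strictly decreasing sequences of positive integers of length `L`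
(encoded as functions `ℕ → ℕ` vanishing from `L` on). -/
def DecSeq (L : ℕ) : Type :=
  {n : ℕ → ℕ //
    (∀ i j : ℕ, i < j → j < L → n j < n i) ∧ (∀ i, i < L → 0 < n i) ∧ ∀ i, L ≤ i → n i = 0}

/-- `Lpart m l i = l₁ + ⋯ + l_{i-1}` (0-indexed: the sum of the `l j` for `j < i`),
i.e. the flat index of the first entry of the `i`-th block. -/
def Lpart (m : ℕ) (l : Fin m → ℕ) (i : Fin m) : ℕ :=
  ∑ j : Fin m, if j < i then l j else 0

/-- The generating function
`f({kᵢ,lᵢ}ᵢ; λ) = Σ_{n₁ > ⋯ > n_{L_m} > 0} ∏ᵢ [ 1/n_{L_{i-1}+1}^{kᵢ} ∏_j 1/(n_j - λ) ]`. -/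
noncomputable def genF (m : ℕ) (k l : Fin m → ℕ) (lam : ℂ) : ℂ :=
  ∑' n : DecSeq (∑ j, l j),
    ∏ i : Fin m,
      (1 / ((n.1 (Lpart m l i) : ℂ)) ^ k i *
        ∏ j ∈ Finset.Ico (Lpart m l i) (Lpart m l i + l i), 1 / ((n.1 j : ℂ) - lam))

open Finset

theorem summable_pi_prod_of_nonneg {β : Type*} {f : β → ℝ} (hf : Summable f) (hf0 : 0 ≤ f) :
    ∀ L : ℕ, Summable fun v : Fin L → β => ∏ j, f (v j)
  | 0 => .of_finite
  | L + 1 => by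
    have hprod := hf.mul_of_nonneg (summable_pi_prod_of_nonneg hf hf0 L) hf0
      fun v => prod_nonneg fun j _ => hf0 (v j)
    refine (Equiv.summable_iff (Fin.consEquiv fun _ => β)).mp ?_
    simpa [Function.comp_def, Fin.consEquiv, Fin.prod_univ_succ] using hprod

theorem Lpart_eq_sum_castLE (m : ℕ) (l : Fin m → ℕ) (i : Fin m) :
    Lpart m l i = ∑ j : Fin i, l (Fin.castLE i.2.le j) := by
  rw [Lpart, ← sum_filter]
  symm
  refine sum_bij (fun j _ => Fin.castLE i.2.le j) (fun j _ => mem_filter.mpr ⟨mem_univ _, j.2⟩)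
    (fun _ _ _ _ h => Fin.castLE_injective _ h)
    (fun a ha => ⟨⟨a, (mem_filter.mp ha).2⟩, mem_univ _, rfl⟩) fun _ _ => rfl

theorem prod_prod_Ico_Lpart {M : Type*} [CommMonoid M] (m : ℕ) (l : Fin m → ℕ) (g : ℕ → M) :
    ∏ i, ∏ j ∈ Ico (Lpart m l i) (Lpart m l i + l i), g j = ∏ j : Fin (∑ i, l i), g j := by
  calc _ = ∏ x : (i : Fin m) × Fin (l i), g (Lpart m l x.1 + x.2) := by
        rw [Fintype.prod_sigma]
        refine prod_congr rfl fun i _ => ?_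
        rw [prod_Ico_eq_prod_range, Nat.add_sub_cancel_left,
          Fin.prod_univ_eq_prod_range (fun t => g (Lpart m l i + t))]
    _ = ∏ x, g (finSigmaFinEquiv x) := by
        simp only [finSigmaFinEquiv_apply, Lpart_eq_sum_castLE]
    _ = _ := finSigmaFinEquiv.prod_comp fun y => g y

theorem exists_norm_inv_natCast_sub_le (lam : ℂ) :
    ∃ C : ℝ, ∀ t : ℕ, 0 < t → ‖((t : ℂ) - lam)⁻¹‖ ≤ C * (t : ℝ)⁻¹ := by
  obtain ⟨C, hC⟩ := (tendsto_natCast_div_add_atTop (-lam)).norm.bddAbove_range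
  refine ⟨C, fun t ht => ?_⟩
  rw [← div_eq_mul_inv, le_div_iff₀ (by exact_mod_cast ht), mul_comm]
  simpa [div_eq_mul_inv, ← sub_eq_add_neg] using hC ⟨t, rfl⟩

theorem prod_pow_le_of_le_one {ι R : Type*} [Fintype ι] [CommSemiring R] [PartialOrder R]
    [IsOrderedRing R] {x : ι → R} (hx0 : 0 ≤ x) (hx1 : x ≤ 1) {k : ι → ℕ} {a : ι}
    (ha : k a ≠ 0) : ∏ i, x i ^ k i ≤ x a := by
  classical
  rw [← mul_prod_erase _ _ (mem_univ a)]
  calc _ ≤ x a ^ k a * 1 := by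
        gcongr
        · exact pow_nonneg (hx0 a) _
        · exact prod_le_one (fun i _ => pow_nonneg (hx0 i) _) fun i _ => pow_le_one₀ (hx0 i) (hx1 i)
    _ ≤ x a := by rw [mul_one]; exact pow_le_of_le_one (hx0 a) (hx1 a) ha

theorem Lpart_mk_zero {m : ℕ} (hm : 0 < m) (l : Fin m → ℕ) : Lpart m l ⟨0, hm⟩ = 0 := by
  simp [Lpart_eq_sum_castLE]

namespace DecSeq

variable {L : ℕ}

theorem le_head (n : DecSeq L) (j : ℕ) : n.1 j ≤ n.1 0 := by
  obtain ⟨f, hdec, -, hzero⟩ := n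
  rcases Nat.eq_zero_or_pos j with rfl | hj
  · rfl
  by_cases hjL : j < L
  · exact (hdec 0 j hj hjL).le
  · simp [hzero j (not_lt.mp hjL)]

theorem injective_restrict : Function.Injective fun n : DecSeq L => fun j : Fin L => n.1 j := by
  intro a b h
  refine Subtype.ext (funext fun i => ?_)
  by_cases hi : i < L
  · exact congrFun h ⟨i, hi⟩
  · rw [a.2.2.2 i (not_lt.mp hi), b.2.2.2 i (not_lt.mp hi)]

theorem inv_head_le_prod_inv_rpow (hL : L ≠ 0) (n : DecSeq L) :
    (n.1 0 : ℝ)⁻¹ ≤ ∏ j : Fin L, ((n.1 j : ℝ) ^ (L⁻¹ : ℝ))⁻¹ := by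
  rw [prod_inv_distrib]
  refine inv_anti₀ (prod_pos fun j _ => Real.rpow_pos_of_pos (by exact_mod_cast n.2.2.1 j j.2) _) ?_
  calc ∏ j : Fin L, (n.1 j : ℝ) ^ (L⁻¹ : ℝ) ≤ ∏ _j : Fin L, (n.1 0 : ℝ) ^ (L⁻¹ : ℝ) := by
        gcongr with j
        exact_mod_cast n.le_head j
    _ = n.1 0 := by
        rw [prod_const, card_univ, Fintype.card_fin, Real.rpow_inv_natCast_pow (by positivity) hL]

theorem inv_head_mul_prod_inv_le (hL : L ≠ 0) (n : DecSeq L) :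
    (n.1 0 : ℝ)⁻¹ * ∏ j : Fin L, (n.1 j : ℝ)⁻¹ ≤
      ∏ j : Fin L, ((n.1 j : ℝ) ^ (1 + (L⁻¹ : ℝ)))⁻¹ := by
  have hsplit (j : Fin L) :
      ((n.1 j : ℝ) ^ (1 + (L⁻¹ : ℝ)))⁻¹ = ((n.1 j : ℝ) ^ (L⁻¹ : ℝ))⁻¹ * (n.1 j : ℝ)⁻¹ := by
    rw [Real.rpow_add (by exact_mod_cast n.2.2.1 j j.2), Real.rpow_one, mul_inv, mul_comm]
  rw [prod_congr rfl fun j _ => hsplit j, prod_mul_distrib]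
  gcongr
  exact inv_head_le_prod_inv_rpow hL n

theorem summable_inv_head_mul_prod_inv (hL : L ≠ 0) :
    Summable fun n : DecSeq L => (n.1 0 : ℝ)⁻¹ * ∏ j : Fin L, (n.1 j : ℝ)⁻¹ := by
  have hp : Summable fun t : ℕ => ((t : ℝ) ^ (1 + (L⁻¹ : ℝ)))⁻¹ :=
    Real.summable_nat_rpow_inv.mpr (lt_add_of_pos_right 1 (by positivity))
  exact .of_nonneg_of_le (fun n => by positivity) (inv_head_mul_prod_inv_le hL)
    ((summable_pi_prod_of_nonneg hp (fun t => by positivity) L).comp_injective injective_restrict)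

end DecSeq

theorem norm_genF_summand_le {m : ℕ} (hm : 1 ≤ m) {k l : Fin m → ℕ} (hk : 1 ≤ k ⟨0, hm⟩) {lam : ℂ}
    {C : ℝ} (hC : ∀ t : ℕ, 0 < t → ‖((t : ℂ) - lam)⁻¹‖ ≤ C * (t : ℝ)⁻¹)
    (n : DecSeq (∑ j, l j)) :
    ‖∏ i : Fin m, (1 / ((n.1 (Lpart m l i) : ℂ)) ^ k i *
        ∏ j ∈ Ico (Lpart m l i) (Lpart m l i + l i), 1 / ((n.1 j : ℂ) - lam))‖
      ≤ C ^ (∑ j, l j) * ((n.1 0 : ℝ)⁻¹ * ∏ j : Fin (∑ j, l j), (n.1 j : ℝ)⁻¹) := by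
  rw [prod_mul_distrib, prod_prod_Ico_Lpart, norm_mul, norm_prod, norm_prod]
  have hhead : ∏ i, ‖1 / (n.1 (Lpart m l i) : ℂ) ^ k i‖ ≤ (n.1 0 : ℝ)⁻¹ := by
    simp only [one_div, norm_inv, norm_pow, Complex.norm_natCast, ← inv_pow]
    simpa [Lpart_mk_zero] using prod_pow_le_of_le_one (x := fun i => (n.1 (Lpart m l i) : ℝ)⁻¹)
      (fun i => by positivity) (fun i => Nat.cast_inv_le_one _) (a := ⟨0, hm⟩) (by omega)
  have htail (j : Fin (∑ j, l j)) : ‖1 / ((n.1 j : ℂ) - lam)‖ ≤ C * (n.1 j : ℝ)⁻¹ := by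
    simpa using hC _ (n.2.2.1 j j.2)
  calc _ ≤ (n.1 0 : ℝ)⁻¹ * ∏ j : Fin (∑ j, l j), (C * (n.1 j : ℝ)⁻¹) :=
        mul_le_mul hhead (prod_le_prod (fun _ _ => norm_nonneg _) fun j _ => htail j)
          (by positivity) (by positivity)
    _ = _ := by rw [prod_mul_distrib, prod_const, card_univ, Fintype.card_fin]; ring

/-- The family defining `f({kᵢ,lᵢ}ᵢ; λ)` is absolutely summable for every `λ`
outside the positive integers. -/
theorem genF_summable (m : ℕ) (hm : 1 ≤ m) (k l : Fin m → ℕ)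
    (hk : 1 ≤ k ⟨0, hm⟩) (hl : 1 ≤ l ⟨m - 1, by omega⟩)
    (lam : ℂ) :
    Summable fun n : DecSeq (∑ j, l j) =>
      ‖∏ i : Fin m,
        (1 / ((n.1 (Lpart m l i) : ℂ)) ^ k i *
          ∏ j ∈ Finset.Ico (Lpart m l i) (Lpart m l i + l i), 1 / ((n.1 j : ℂ) - lam))‖ := by
  obtain ⟨C, hC⟩ := exists_norm_inv_natCast_sub_le lam
  have hL : ∑ j, l j ≠ 0 :=
    (lt_of_lt_of_le hl (single_le_sum (fun j _ => Nat.zero_le (l j)) (mem_univ _))).ne'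
  exact .of_nonneg_of_le (fun n => norm_nonneg _) (norm_genF_summand_le hm hk hC)
    ((DecSeq.summable_inv_head_mul_prod_inv hL).mul_left _)
end

section
/- Let m ≥ 1 be an integer and let c : {1,2,3,…} → ℂ satisfy Σ_{n=1}^∞ |c_n| < ∞. For λ ∈ ℂ that is not a positive integer define h(λ) = λ^m · Σ_{n=1}^∞ c_n/(n − λ). If h(λ + 1) = h(λ) for every λ ∈ ℂ such that neither λ nor λ + 1 is a positive integer (i.e. h is periodic with period 1), then c_n = 0 for every n ≥ 1, and consequently h is identically zero. -/
/-!
Multiplying `h` by `λ - k` and letting `λ → k` (with `λ ≠ k`) isolates the residue of `h` at the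
positive integer `k`, namely `-k ^ m c_k`, because within distance `1/2` of `k` the other terms
are dominated by `2 |c_n|` and so sum to a bounded function; at `k = 0` the series has no pole and
the limit is `0`. A function of period `1` has the same residue at `k` and at `k + 1`, so all
residues equal the one at `0`, which vanishes; hence every `c_k` does.
-/

open Filter Topology

theorem tsum_add_one_of_apply_zero {α : Type*} [AddCommMonoid α] [TopologicalSpace α]
    {f : ℕ → α} (hf : f 0 = 0) : ∑' n, f (n + 1) = ∑' n, f n :=
  Nat.succ_injective.tsum_eq fun _ hn =>
    Nat.range_succ ▸ Nat.pos_of_ne_zero fun h0 => hn (h0 ▸ hf)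

namespace PartialFractions

lemma one_le_norm_natCast_sub_natCast {n k : ℕ} (hnk : n ≠ k) : 1 ≤ ‖(n : ℂ) - k‖ := by
  have hcast : (n : ℂ) - k = ((n - k : ℤ) : ℂ) := by push_cast; ring
  rw [hcast, Complex.norm_intCast]
  exact_mod_cast Int.one_le_abs (sub_ne_zero.2 (Nat.cast_injective.ne hnk))

lemma eventually_nhdsNE_ne_natCast (k : ℕ) : ∀ᶠ z : ℂ in 𝓝[≠] (k : ℂ), ∀ n : ℕ, z ≠ n := by
  filter_upwards [nhdsWithin_le_nhds (Metric.ball_mem_nhds (k : ℂ) one_pos),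
    self_mem_nhdsWithin] with z hz hzk n hzn
  subst hzn
  rw [Metric.mem_ball, dist_eq_norm] at hz
  exact (one_le_norm_natCast_sub_natCast fun h => hzk (congrArg Nat.cast h)).not_gt hz

lemma eventually_nhdsNE_ne_natCast_and_add_one_ne (k : ℕ) :
    ∀ᶠ z : ℂ in 𝓝[≠] (k : ℂ), ∀ n : ℕ, 0 < n → z ≠ n ∧ z + 1 ≠ n := by
  filter_upwards [eventually_nhdsNE_ne_natCast k] with z hz n hn
  refine ⟨hz n, fun hzn => hz (n - 1) ?_⟩
  rw [Nat.cast_sub hn, ← hzn]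
  ring

lemma half_le_norm_natCast_sub {n k : ℕ} {z : ℂ} (hnk : n ≠ k) (hz : ‖z - k‖ < 1 / 2) :
    1 / 2 ≤ ‖(n : ℂ) - z‖ := by
  have := norm_sub_le ((n : ℂ) - z) ((k : ℂ) - z)
  rw [sub_sub_sub_cancel_right, norm_sub_rev (k : ℂ)] at this
  linarith [one_le_norm_natCast_sub_natCast hnk]

variable {a : ℕ → ℂ}

lemma norm_div_natCast_sub_le {n k : ℕ} {z : ℂ} (hnk : n ≠ k) (hz : ‖z - k‖ < 1 / 2) :
    ‖a n / (n - z)‖ ≤ 2 * ‖a n‖ := by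
  rw [norm_div, div_le_iff₀ (by linarith [half_le_norm_natCast_sub hnk hz])]
  nlinarith [half_le_norm_natCast_sub hnk hz, norm_nonneg (a n)]

lemma summable_div_natCast_sub (ha : Summable (‖a ·‖)) {k : ℕ} {z : ℂ} (hz : ‖z - k‖ < 1 / 2) :
    Summable fun n : ℕ => a n / (n - z) :=
  (ha.mul_left 2).of_norm_bounded_eventually <|
    (eventually_cofinite_ne k).mono fun _ hnk => norm_div_natCast_sub_le hnk hz

lemma norm_tsum_ite_div_natCast_sub_le (ha : Summable (‖a ·‖)) {k : ℕ} {z : ℂ}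
    (hz : ‖z - k‖ < 1 / 2) :
    ‖∑' n : ℕ, if n = k then 0 else a n / (n - z)‖ ≤ 2 * ∑' n, ‖a n‖ := by
  refine tsum_of_norm_bounded (ha.hasSum.mul_left 2) fun n => ?_
  split_ifs with hnk
  · simp
  · exact norm_div_natCast_sub_le hnk hz

theorem tendsto_sub_mul_tsum_div_natCast_sub (ha : Summable (‖a ·‖)) (k : ℕ) :
    Tendsto (fun z : ℂ => (z - k) * ∑' n : ℕ, a n / (n - z)) (𝓝[≠] (k : ℂ)) (𝓝 (-a k)) := by
  have hball : ∀ᶠ z : ℂ in 𝓝 (k : ℂ), ‖z - k‖ < 1 / 2 := by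
    filter_upwards [Metric.ball_mem_nhds (k : ℂ) one_half_pos] with z hz
    rwa [Metric.mem_ball, dist_eq_norm] at hz
  have hremainder : Tendsto (fun z : ℂ => (z - k) * ∑' n : ℕ, if n = k then 0 else a n / (n - z))
      (𝓝 (k : ℂ)) (𝓝 0) :=
    (tendsto_sub_nhds_zero_iff.2 tendsto_id).zero_mul_isBoundedUnder_le
      ⟨_, eventually_map.2 (hball.mono fun _ hz => norm_tsum_ite_div_natCast_sub_le ha hz)⟩
  have hsplit : ∀ᶠ z : ℂ in 𝓝[≠] (k : ℂ),
      -a k + (z - k) * (∑' n : ℕ, if n = k then 0 else a n / (n - z)) =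
        (z - k) * ∑' n : ℕ, a n / (n - z) := by
    filter_upwards [nhdsWithin_le_nhds hball, self_mem_nhdsWithin] with z hz hzk
    rw [(summable_div_natCast_sub ha hz).tsum_eq_add_tsum_ite k]
    have hkz : (k : ℂ) - z ≠ 0 := sub_ne_zero.2 (Ne.symm hzk)
    field_simp
    ring
  simpa using (tendsto_const_nhds.add (hremainder.mono_left nhdsWithin_le_nhds)).congr' hsplit

theorem eq_of_tendsto_sub_mul_of_add_one_eq {g : ℂ → ℂ} {w L L' : ℂ}
    (hper : ∀ᶠ z in 𝓝[≠] w, g (z + 1) = g z)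
    (hL : Tendsto (fun z => (z - w) * g z) (𝓝[≠] w) (𝓝 L))
    (hL' : Tendsto (fun z => (z - (w + 1)) * g z) (𝓝[≠] (w + 1)) (𝓝 L')) : L' = L := by
  have hshift : Tendsto (· + 1) (𝓝[≠] w) (𝓝[≠] (w + 1)) := Filter.map_add_right_nhdsNE.le
  refine tendsto_nhds_unique ((hL'.comp hshift).congr' ?_) hL
  filter_upwards [hper] with z hz
  simp only [Function.comp_apply, hz, add_sub_add_right_eq_sub]

end PartialFractions

open PartialFractions in
theorem periodic_partial_fractions_vanish_general (m : ℕ) (c : ℕ → ℂ)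
    (hc : Summable fun n : ℕ => ‖c (n + 1)‖)
    (h : ℂ → ℂ)
    (hdef : ∀ lam : ℂ, (∀ n : ℕ, 0 < n → lam ≠ (n : ℂ)) →
      h lam = lam ^ m * ∑' n : ℕ, c (n + 1) / ((n + 1 : ℂ) - lam))
    (hper : ∀ lam : ℂ,
      (∀ n : ℕ, 0 < n → lam ≠ (n : ℂ) ∧ lam + 1 ≠ (n : ℂ)) → h (lam + 1) = h lam) :
    (∀ n : ℕ, 1 ≤ n → c n = 0) ∧
      ∀ lam : ℂ, (∀ n : ℕ, 0 < n → lam ≠ (n : ℂ)) → h lam = 0 := by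
  -- `a 0 = 0` records that the series has no pole at `0`, so every residue is `-k ^ m * a k`.
  set a : ℕ → ℂ := fun n => if n = 0 then 0 else c n
  have ha : Summable (‖a ·‖) := (summable_nat_add_iff 1).1 (by simpa [a] using hc)
  have hseries (z : ℂ) :
      ∑' n : ℕ, c (n + 1) / ((n + 1 : ℂ) - z) = ∑' n : ℕ, a n / (n - z) := by
    simpa [a] using tsum_add_one_of_apply_zero (f := fun n : ℕ => a n / (n - z)) (by simp [a])
  have hres (k : ℕ) : Tendsto (fun z => (z - k) * h z) (𝓝[≠] (k : ℂ)) (𝓝 (-(k ^ m * a k))) := by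
    have hpow : Tendsto (· ^ m) (𝓝[≠] (k : ℂ)) (𝓝 ((k : ℂ) ^ m)) :=
      ((continuous_pow m).tendsto _).mono_left nhdsWithin_le_nhds
    refine (mul_neg _ (a k) ▸ hpow.mul (tendsto_sub_mul_tsum_div_natCast_sub ha k)).congr' ?_
    filter_upwards [eventually_nhdsNE_ne_natCast k] with z hz
    rw [hdef z fun n _ => hz n, hseries]
    ring
  have hstep (k : ℕ) : ((k + 1 : ℕ) : ℂ) ^ m * a (k + 1) = k ^ m * a k := by
    have hperiodic : ∀ᶠ z : ℂ in 𝓝[≠] (k : ℂ), h (z + 1) = h z :=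
      (eventually_nhdsNE_ne_natCast_and_add_one_ne k).mono hper
    exact neg_injective <|
      eq_of_tendsto_sub_mul_of_add_one_eq hperiodic (hres k) (by simpa using hres (k + 1))
  have hresidue_zero (k : ℕ) : (k : ℂ) ^ m * a k = 0 := by
    induction k with
    | zero => simp [a]
    | succ k ih => rw [hstep, ih]
  have hc_zero (n : ℕ) (hn : 1 ≤ n) : c n = 0 := by
    have hn0 : n ≠ 0 := Nat.one_le_iff_ne_zero.1 hn
    simpa [a, hn0] using hresidue_zero n
  refine ⟨hc_zero, fun z hz => ?_⟩
  simp [hdef z hz, hc_zero]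

/-- If `h(λ) = λ^m Σ_{n≥1} c_n/(n - λ)` (with `Σ|c_n| < ∞`) is periodic with period 1
on the complement of the positive integers, then all `c_n` vanish and `h` is
identically zero there.  Here `c : ℕ → ℂ` and `c (n+1)` encodes `c_n` for `n ≥ 1`. -/
theorem periodic_partial_fractions_vanish (m : ℕ) (hm : 1 ≤ m) (c : ℕ → ℂ)
    (hc : Summable fun n : ℕ => ‖c (n + 1)‖)
    (h : ℂ → ℂ)
    (hdef : ∀ lam : ℂ, (∀ n : ℕ, 0 < n → lam ≠ (n : ℂ)) →
      h lam = lam ^ m * ∑' n : ℕ, c (n + 1) / ((n + 1 : ℂ) - lam))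
    (hper : ∀ lam : ℂ,
      (∀ n : ℕ, 0 < n → lam ≠ (n : ℂ) ∧ lam + 1 ≠ (n : ℂ)) → h (lam + 1) = h lam) :
    (∀ n : ℕ, 1 ≤ n → c n = 0) ∧
      ∀ lam : ℂ, (∀ n : ℕ, 0 < n → lam ≠ (n : ℂ)) → h lam = 0 :=
  periodic_partial_fractions_vanish_general m c hc h hdef hper
end
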